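/- Let G be a graph and e an edge of G. If Staller has a winning strategy in both the D-game and the S-game of the Maker-Breaker domination game on G, then Staller also wins both games on G − e; moreover γ_SMB(G−e) ≤ γ_SMB(G) and γ_SMB'(G−e) ≤ γ_SMB'(G). -/

import Mathlib

open SimpleGraph

namespace MBD

variable {V : Type*}

/-- Dominator's claimed set `D` is a dominating set of `G`. -/
def Dominates (G : SimpleGraph V) (D : Finset V) : Prop :=
  ∀ v : V, ∃ d ∈ D, d = v ∨ G.Adj d v

/-- Staller's claimed set `S` contains the whole closed neighborhood of some vertex. -/
def StallerWinSet (G : SimpleGraph V) (S : Finset V) : Prop :=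
  ∃ v : V, ∀ u : V, (u = v ∨ G.Adj u v) → u ∈ S

variable [DecidableEq V]

mutual
  /-- `DomD G k D S`: with Dominator having claimed `D`, Staller `S`, and Dominator to
  move, Dominator has a strategy winning the Maker-Breaker domination game on `G`
  using at most `k` further moves of his own. -/
  inductive DomD (G : SimpleGraph V) : ℕ → Finset V → Finset V → Prop
    | win {k : ℕ} {D S : Finset V} : Dominates G D → DomD G k D S
    | move {k : ℕ} {D S : Finset V} (v : V) : v ∉ D → v ∉ S →
        DomS G k (insert v D) S → DomD G (k + 1) D S
  /-- Like `DomD`, but it is Staller's turn to move. -/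
  inductive DomS (G : SimpleGraph V) : ℕ → Finset V → Finset V → Prop
    | win {k : ℕ} {D S : Finset V} : Dominates G D → DomS G k D S
    | move {k : ℕ} {D S : Finset V} : (∃ v : V, v ∉ D ∧ v ∉ S) →
        (∀ v : V, v ∉ D → v ∉ S → DomD G k D (insert v S)) → DomS G k D S
end

mutual
  /-- `StallD G k D S`: with Dominator having claimed `D`, Staller `S`, and Dominator to
  move, Staller has a strategy winning (claiming a whole closed neighborhood) within at
  most `k` further moves of her own. -/
  inductive StallD (G : SimpleGraph V) : ℕ → Finset V → Finset V → Prop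
    | win {k : ℕ} {D S : Finset V} : StallerWinSet G S → StallD G k D S
    | move {k : ℕ} {D S : Finset V} : (∃ v : V, v ∉ D ∧ v ∉ S) →
        (∀ v : V, v ∉ D → v ∉ S → StallS G k (insert v D) S) → StallD G k D S
  /-- Like `StallD`, but it is Staller's turn to move. -/
  inductive StallS (G : SimpleGraph V) : ℕ → Finset V → Finset V → Prop
    | win {k : ℕ} {D S : Finset V} : StallerWinSet G S → StallS G k D S
    | move {k : ℕ} {D S : Finset V} (v : V) : v ∉ D → v ∉ S →
        StallD G k D (insert v S) → StallS G (k + 1) D S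
end

/-- Dominator has a winning strategy in the D-game (Dominator starts). -/
def DominatorWinsD (G : SimpleGraph V) : Prop := ∃ k, DomD G k ∅ ∅

/-- Dominator has a winning strategy in the S-game (Staller starts). -/
def DominatorWinsS (G : SimpleGraph V) : Prop := ∃ k, DomS G k ∅ ∅

/-- Staller has a winning strategy in the D-game (Dominator starts). -/
def StallerWinsD (G : SimpleGraph V) : Prop := ∃ k, StallD G k ∅ ∅

/-- Staller has a winning strategy in the S-game (Staller starts). -/
def StallerWinsS (G : SimpleGraph V) : Prop := ∃ k, StallS G k ∅ ∅

/-- Outcome `𝒟`: Dominator wins both the D-game and the S-game. -/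
def outcomeD (G : SimpleGraph V) : Prop := DominatorWinsD G ∧ DominatorWinsS G

/-- Outcome `𝒮`: Staller wins both the D-game and the S-game. -/
def outcomeS (G : SimpleGraph V) : Prop := StallerWinsD G ∧ StallerWinsS G

/-- Outcome `𝒩`: the first player wins in both games. -/
def outcomeN (G : SimpleGraph V) : Prop := DominatorWinsD G ∧ StallerWinsS G

/-- `γ_MB(G)`: the minimum number of Dominator's moves needed to win the D-game,
`∞` if he has no winning strategy. -/
noncomputable def gMB (G : SimpleGraph V) : ℕ∞ :=
  sInf ((fun k : ℕ => (k : ℕ∞)) '' {k | DomD G k ∅ ∅})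

/-- `γ_MB'(G)`: the minimum number of Dominator's moves needed to win the S-game. -/
noncomputable def gMB' (G : SimpleGraph V) : ℕ∞ :=
  sInf ((fun k : ℕ => (k : ℕ∞)) '' {k | DomS G k ∅ ∅})

/-- `γ_SMB(G)`: the minimum number of Staller's moves needed to win the D-game. -/
noncomputable def gSMB (G : SimpleGraph V) : ℕ∞ :=
  sInf ((fun k : ℕ => (k : ℕ∞)) '' {k | StallD G k ∅ ∅})

/-- `γ_SMB'(G)`: the minimum number of Staller's moves needed to win the S-game. -/
noncomputable def gSMB' (G : SimpleGraph V) : ℕ∞ :=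
  sInf ((fun k : ℕ => (k : ℕ∞)) '' {k | StallS G k ∅ ∅})

end MBD

/-! Deleting edges only shrinks closed neighbourhoods, so a set of Staller's that contains a
closed neighbourhood of `G` still contains one of any spanning subgraph `H ≤ G`. Hence every
winning strategy of Staller on `G` wins, move for move, on `H`: both games stay Staller wins,
and her minimal number of moves can only drop. -/

namespace MBD

variable {V : Type*} {G H : SimpleGraph V}

theorem StallerWinSet.anti (hle : H ≤ G) {S : Finset V} (h : StallerWinSet G S) :
    StallerWinSet H S := by
  obtain ⟨v, hv⟩ := h
  exact ⟨v, fun u hu => hv u (hu.imp id fun huv => hle huv)⟩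

variable [DecidableEq V]

mutual
theorem StallD.anti (hle : H ≤ G) {k : ℕ} {D S : Finset V} (h : StallD G k D S) :
    StallD H k D S :=
  match h with
  | .win hw => .win (hw.anti hle)
  | .move hfree hreply => .move hfree fun v hvD hvS => (hreply v hvD hvS).anti hle
theorem StallS.anti (hle : H ≤ G) {k : ℕ} {D S : Finset V} (h : StallS G k D S) :
    StallS H k D S :=
  match h with
  | .win hw => .win (hw.anti hle)
  | .move v hvD hvS hnext => .move v hvD hvS (hnext.anti hle)
end

theorem StallerWinsD.anti (hle : H ≤ G) (h : StallerWinsD G) : StallerWinsD H :=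
  h.imp fun _ hk => hk.anti hle

theorem StallerWinsS.anti (hle : H ≤ G) (h : StallerWinsS G) : StallerWinsS H :=
  h.imp fun _ hk => hk.anti hle

theorem gSMB_monotone : Monotone (gSMB (V := V)) := fun _ _ hle =>
  sInf_le_sInf <| Set.image_mono fun _ hk => StallD.anti hle hk

theorem gSMB'_monotone : Monotone (gSMB' (V := V)) := fun _ _ hle =>
  sInf_le_sInf <| Set.image_mono fun _ hk => StallS.anti hle hk

end MBD

/-- Edge deletion, Staller's side: if Staller wins both games on `G`, then she wins both
games on `G − e`, and moreover `γ_SMB(G−e) ≤ γ_SMB(G)` and `γ_SMB'(G−e) ≤ γ_SMB'(G)`. -/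
theorem stmt_5 {V : Type*} [Fintype V] [DecidableEq V] (G : SimpleGraph V)
    (e : Sym2 V) (he : e ∈ G.edgeSet)
    (hD : MBD.StallerWinsD G) (hS : MBD.StallerWinsS G) :
    (MBD.StallerWinsD (G.deleteEdges {e}) ∧ MBD.StallerWinsS (G.deleteEdges {e})) ∧
    MBD.gSMB (G.deleteEdges {e}) ≤ MBD.gSMB G ∧
    MBD.gSMB' (G.deleteEdges {e}) ≤ MBD.gSMB' G := by
  have hle : G.deleteEdges {e} ≤ G := G.deleteEdges_le {e}
  exact ⟨⟨hD.anti hle, hS.anti hle⟩, MBD.gSMB_monotone hle, MBD.gSMB'_monotone hle⟩
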